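/- Let Λ(θ) = −(√(−2θ)/σ)·tanh(σ√(−2θ)/2)·S₀ for θ ≤ 0 with σ, S₀ > 0, and let I(K) = sup_{θ≤0} {θK − Λ(θ)} for K > 0. Then I(K)·K → S₀²/(2σ²) as K → 0⁺, i.e. I(K) ~ S₀²/(2σ²K) as K → 0. -/

import Mathlib

open Real Filter

/-!
For `θ ≤ 0` write `θ = -x²/2` with `x = √(-2θ)`. Since `tanh < 1`,
`θK - Λ(θ) ≤ -x²K/2 + xS₀/σ ≤ S₀²/(2σ²K)`, so `I(K)·K ≤ S₀²/(2σ²)`. Conversely the maximiser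
`x = S₀/(σK)` of that quadratic gives `I(K)·K ≥ S₀²/(2σ²)·(2 tanh(S₀/(2K)) - 1)`, which tends to
`S₀²/(2σ²)` as `K → 0⁺` because `tanh t → 1` as `t → ∞`.
-/

/-- The `θ ≤ 0` branch of the limiting cumulant generating function of the
time-averaged square-root process. -/
noncomputable def cumulantSqrtNeg (σ S₀ θ : ℝ) : ℝ :=
  -(Real.sqrt (-2 * θ) / σ) * Real.tanh (σ * Real.sqrt (-2 * θ) / 2) * S₀

/-- `I(K) = sup_{θ ≤ 0} {θK − Λ(θ)}`. -/
noncomputable def rateFnNeg (σ S₀ K : ℝ) : ℝ :=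
  sSup ((fun θ => θ * K - cumulantSqrtNeg σ S₀ θ) '' Set.Iic (0 : ℝ))

theorem Real.tanh_eq_one_sub (x : ℝ) : tanh x = 1 - 2 / (exp (2 * x) + 1) := by
  rw [tanh_eq, exp_neg, two_mul, exp_add]
  have hx : 0 < exp x := exp_pos x
  field_simp
  ring

theorem Real.tendsto_tanh_atTop : Tendsto tanh atTop (nhds 1) := by
  have hexp : Tendsto (fun x : ℝ => exp (2 * x) + 1) atTop atTop :=
    tendsto_atTop_add_const_right _ 1
      (tendsto_exp_atTop.comp (tendsto_id.const_mul_atTop two_pos))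
  have h := (hexp.inv_tendsto_atTop.const_mul 2).const_sub 1
  simp only [mul_zero, sub_zero] at h
  exact h.congr fun x => by rw [tanh_eq_one_sub, div_eq_mul_inv]; rfl

theorem neg_cumulantSqrtNeg_le {σ S₀ : ℝ} (hσ : 0 < σ) (hS₀ : 0 ≤ S₀) (θ : ℝ) :
    -cumulantSqrtNeg σ S₀ θ ≤ √(-2 * θ) / σ * S₀ := by
  have htanh := (tanh_lt_one (σ * √(-2 * θ) / 2)).le
  have hx : 0 ≤ √(-2 * θ) / σ := by positivity
  simpa [cumulantSqrtNeg] using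
    mul_le_mul_of_nonneg_right (mul_le_of_le_one_right hx htanh) hS₀

theorem mul_sub_cumulantSqrtNeg_le {σ S₀ K θ : ℝ} (hσ : 0 < σ) (hS₀ : 0 ≤ S₀) (hK : 0 < K)
    (hθ : θ ≤ 0) : θ * K - cumulantSqrtNeg σ S₀ θ ≤ S₀ ^ 2 / (2 * σ ^ 2 * K) := by
  set x := √(-2 * θ)
  have hθx : θ = -x ^ 2 / 2 := by rw [sq_sqrt (by linarith)]; ring
  have hgap : S₀ ^ 2 / (2 * σ ^ 2 * K) - (θ * K + x / σ * S₀)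
      = (σ * x * K - S₀) ^ 2 / (2 * σ ^ 2 * K) := by
    rw [hθx]; field_simp; ring
  have hsq : 0 ≤ (σ * x * K - S₀) ^ 2 / (2 * σ ^ 2 * K) := by positivity
  linarith [neg_cumulantSqrtNeg_le hσ hS₀ θ]

theorem mem_upperBounds_rateFnNeg {σ S₀ K : ℝ} (hσ : 0 < σ) (hS₀ : 0 ≤ S₀) (hK : 0 < K) :
    S₀ ^ 2 / (2 * σ ^ 2 * K) ∈
      upperBounds ((fun θ => θ * K - cumulantSqrtNeg σ S₀ θ) '' Set.Iic 0) := by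
  rintro _ ⟨θ, hθ, rfl⟩
  exact mul_sub_cumulantSqrtNeg_le hσ hS₀ hK hθ

theorem rateFnNeg_mul_le {σ S₀ K : ℝ} (hσ : 0 < σ) (hS₀ : 0 ≤ S₀) (hK : 0 < K) :
    rateFnNeg σ S₀ K * K ≤ S₀ ^ 2 / (2 * σ ^ 2) := by
  have hsup : rateFnNeg σ S₀ K ≤ S₀ ^ 2 / (2 * σ ^ 2 * K) :=
    csSup_le (Set.nonempty_Iic.image _) (mem_upperBounds_rateFnNeg hσ hS₀ hK)
  calc rateFnNeg σ S₀ K * K ≤ S₀ ^ 2 / (2 * σ ^ 2 * K) * K := by gcongr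
    _ = S₀ ^ 2 / (2 * σ ^ 2) := by field_simp

theorem le_rateFnNeg_mul {σ S₀ K : ℝ} (hσ : 0 < σ) (hS₀ : 0 ≤ S₀) (hK : 0 < K) :
    S₀ ^ 2 / (2 * σ ^ 2) * (2 * tanh (S₀ / (2 * K)) - 1) ≤ rateFnNeg σ S₀ K * K := by
  set θ₀ := -(S₀ / (σ * K)) ^ 2 / 2 with hθ₀_def
  have hθ₀ : θ₀ ≤ 0 := by have := sq_nonneg (S₀ / (σ * K)); linarith [hθ₀_def]
  have hsqrt : √(-2 * θ₀) = S₀ / (σ * K) := by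
    rw [show -2 * θ₀ = (S₀ / (σ * K)) ^ 2 by ring, sqrt_sq (by positivity)]
  have harg : σ * (S₀ / (σ * K)) / 2 = S₀ / (2 * K) := by field_simp
  have hvalue : (θ₀ * K - cumulantSqrtNeg σ S₀ θ₀) * K
      = S₀ ^ 2 / (2 * σ ^ 2) * (2 * tanh (S₀ / (2 * K)) - 1) := by
    rw [cumulantSqrtNeg, hsqrt, harg, hθ₀_def]
    field_simp
    ring
  rw [← hvalue]
  gcongr
  exact le_csSup ⟨_, mem_upperBounds_rateFnNeg hσ hS₀ hK⟩ ⟨θ₀, hθ₀, rfl⟩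

theorem stmt7 (σ S₀ : ℝ) (hσ : 0 < σ) (hS₀ : 0 < S₀) :
    Tendsto (fun K => rateFnNeg σ S₀ K * K) (nhdsWithin 0 (Set.Ioi 0))
      (nhds (S₀ ^ 2 / (2 * σ ^ 2))) := by
  have harg : Tendsto (fun K : ℝ => S₀ / (2 * K)) (nhdsWithin 0 (Set.Ioi 0)) atTop := by
    have h := (tendsto_inv_nhdsGT_zero (𝕜 := ℝ)).const_mul_atTop (half_pos hS₀)
    exact h.congr fun K => by field_simp
  have hlower : Tendsto (fun K => S₀ ^ 2 / (2 * σ ^ 2) * (2 * tanh (S₀ / (2 * K)) - 1))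
      (nhdsWithin 0 (Set.Ioi 0)) (nhds (S₀ ^ 2 / (2 * σ ^ 2))) := by
    have h := (((tendsto_tanh_atTop.comp harg).const_mul 2).sub_const 1).const_mul
      (S₀ ^ 2 / (2 * σ ^ 2))
    norm_num at h
    exact h
  refine tendsto_of_tendsto_of_tendsto_of_le_of_le' hlower tendsto_const_nhds ?_ ?_
  · filter_upwards [self_mem_nhdsWithin] with K hK using le_rateFnNeg_mul hσ hS₀.le hK
  · filter_upwards [self_mem_nhdsWithin] with K hK using rateFnNeg_mul_le hσ hS₀.le hK
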